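/- Let V be a finite-dimensional ℚ(t)-vector space with a symmetric bilinear form admitting a basis v_1,…,v_n with (v_i, v_j) ∈ δ_{i,j} + t·A_0. Then for any subspace W ⊆ V, V = W ⊕ W^⊥, where W^⊥ = {v ∈ V : (v,w) = 0 for all w ∈ W}. -/

import Mathlib

/-!
The form is anisotropic. Rescale a nonzero vector so that its coordinates `q i` are polynomials
in `t`, not all vanishing at `t = 0`. The Gram condition gives `B(x, x) = ∑ q i ^ 2 + t • a` with
`a ∈ A₀`, and clearing the denominator of `a` and evaluating at `t = 0` leaves `∑ q i(0) ^ 2 > 0`.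
For an anisotropic reflexive form `W ⊓ Wᗮ = ⊥`, and the dimension count
`dim W + dim Wᗮ ≥ dim V` makes the sum direct.
-/

open Polynomial

noncomputable def A0 : Subring (RatFunc ℚ) where
  carrier := {r | ∃ f g : ℚ[X], g.eval 0 ≠ 0 ∧
    r = algebraMap ℚ[X] (RatFunc ℚ) f / algebraMap ℚ[X] (RatFunc ℚ) g}
  zero_mem' := ⟨0, 1, by simp, by simp⟩
  one_mem' := ⟨1, 1, by simp, by simp⟩
  add_mem' := by
    rintro r s ⟨f1, g1, h1, rfl⟩ ⟨f2, g2, h2, rfl⟩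
    have hg1 : (algebraMap ℚ[X] (RatFunc ℚ)) g1 ≠ 0 :=
      RatFunc.algebraMap_ne_zero (fun h => h1 (by simp [h]))
    have hg2 : (algebraMap ℚ[X] (RatFunc ℚ)) g2 ≠ 0 :=
      RatFunc.algebraMap_ne_zero (fun h => h2 (by simp [h]))
    refine ⟨f1 * g2 + f2 * g1, g1 * g2, by simp [h1, h2], ?_⟩
    field_simp
    simp only [map_add, map_mul]
    ring
  neg_mem' := by
    rintro r ⟨f, g, h, rfl⟩
    exact ⟨-f, g, h, by rw [map_neg, neg_div]⟩
  mul_mem' := by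
    rintro r s ⟨f1, g1, h1, rfl⟩ ⟨f2, g2, h2, rfl⟩
    refine ⟨f1 * f2, g1 * g2, by simp [h1, h2], ?_⟩
    rw [map_mul, map_mul, div_mul_div_comm]

noncomputable def tElem : A0 :=
  ⟨algebraMap ℚ[X] (RatFunc ℚ) X, X, 1, by simp, by simp⟩

noncomputable def tIdeal : Ideal A0 := Ideal.span {tElem}

/-- The subset `t·A₀` of `ℚ(t)`. -/
noncomputable def tA0Set : Set (RatFunc ℚ) :=
  {x | ∃ y ∈ A0, x = algebraMap ℚ[X] (RatFunc ℚ) X * y}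

lemma Polynomial.exists_eq_X_pow_mul_eval_zero_ne_zero {R ι : Type*} [CommRing R] [IsDomain R]
    (f : ι → R[X]) {i₀ : ι} (hi₀ : f i₀ ≠ 0) :
    ∃ (m : ℕ) (q : ι → R[X]), (∀ i, f i = X ^ m * q i) ∧ ∃ i, (q i).eval 0 ≠ 0 := by
  induction hd : (f i₀).natDegree using Nat.strong_induction_on generalizing f with
  | _ d ih =>
    by_cases hf : ∃ i, (f i).eval 0 ≠ 0
    · exact ⟨0, f, by simp, hf⟩
    push Not at hf
    choose g hg using fun i ↦
      (X_dvd_iff (f := f i)).mpr (by rw [coeff_zero_eq_eval_zero]; exact hf i)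
    have hg₀ : g i₀ ≠ 0 := by rintro h; exact hi₀ (by rw [hg, h, mul_zero])
    have hlt : (g i₀).natDegree < d := by rw [← hd, hg, natDegree_X_mul hg₀]; omega
    obtain ⟨m, q, hq, hq₀⟩ := ih _ hlt g hg₀ rfl
    exact ⟨m + 1, q, fun i ↦ by rw [hg, hq, ← mul_assoc, pow_succ'], hq₀⟩

lemma RatFunc.exists_mul_eq_algebraMap_eval_zero_ne_zero {K ι : Type*} [Field K] [Finite ι]
    (c : ι → RatFunc K) (hc : c ≠ 0) :
    ∃ u ≠ 0, ∃ q : ι → K[X], (∀ i, u * c i = algebraMap K[X] (RatFunc K) (q i)) ∧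
      ∃ i, (q i).eval 0 ≠ 0 := by
  obtain ⟨g, hg⟩ := IsLocalization.exist_integer_multiples_of_finite (nonZeroDivisors K[X]) c
  choose f hf using hg
  have hg₀ : algebraMap K[X] (RatFunc K) g ≠ 0 :=
    algebraMap_ne_zero (nonZeroDivisors.coe_ne_zero g)
  have hf' : ∀ i, algebraMap K[X] (RatFunc K) (f i) = algebraMap K[X] (RatFunc K) g * c i :=
    fun i ↦ by rw [hf, Algebra.smul_def]
  obtain ⟨i₀, hi₀⟩ := Function.ne_iff.mp hc
  have hf₀ : f i₀ ≠ 0 := by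
    rintro h
    exact hi₀ (by simpa [h, hg₀] using hf' i₀)
  obtain ⟨m, q, hq, hq₀⟩ := exists_eq_X_pow_mul_eval_zero_ne_zero f hf₀
  have hXm : algebraMap K[X] (RatFunc K) (Polynomial.X ^ m) ≠ 0 :=
    algebraMap_ne_zero (pow_ne_zero m Polynomial.X_ne_zero)
  refine ⟨algebraMap K[X] (RatFunc K) g / algebraMap K[X] (RatFunc K) (Polynomial.X ^ m),
    div_ne_zero hg₀ hXm, q, fun i ↦ ?_, hq₀⟩
  rw [div_mul_eq_mul_div, ← hf', hq, map_mul, mul_div_cancel_left₀ _ hXm]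

lemma algebraMap_mem_A0 (f : ℚ[X]) : algebraMap ℚ[X] (RatFunc ℚ) f ∈ A0 :=
  ⟨f, 1, by simp, by simp⟩

lemma algebraMap_add_X_mul_ne_zero {P : ℚ[X]} (hP : P.eval 0 ≠ 0) {a : RatFunc ℚ} (ha : a ∈ A0) :
    algebraMap ℚ[X] (RatFunc ℚ) P + algebraMap ℚ[X] (RatFunc ℚ) X * a ≠ 0 := by
  obtain ⟨f, g, hg, rfl⟩ := ha
  have hg' : algebraMap ℚ[X] (RatFunc ℚ) g ≠ 0 :=
    RatFunc.algebraMap_ne_zero (by rintro rfl; simp at hg)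
  intro h
  have hpoly : P * g + X * f = 0 := by
    apply RatFunc.algebraMap_injective ℚ
    rw [map_add, map_mul, map_mul, map_zero]
    field_simp at h
    simpa using h
  simpa [hP, hg] using congrArg (eval 0) hpoly

lemma LinearMap.BilinForm.apply_sum_smul_sum_smul {R M ι : Type*} [CommSemiring R]
    [AddCommMonoid M] [Module R M] [Fintype ι] [DecidableEq ι]
    (B : LinearMap.BilinForm R M) (v : ι → M) (s : R) (e : ι → ι → R)
    (h : ∀ i j, B (v i) (v j) = (if i = j then 1 else 0) + s * e i j) (a : ι → R) :
    B (∑ i, a i • v i) (∑ i, a i • v i) = ∑ i, a i * a i + s * ∑ i, ∑ j, a i * a j * e i j := by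
  simp only [map_sum, LinearMap.map_smul, LinearMap.sum_apply, LinearMap.smul_apply, h,
    smul_eq_mul, mul_add, Finset.sum_add_distrib, Finset.mul_sum]
  congr 1
  · simp
  · rw [Finset.sum_comm]
    exact Finset.sum_congr rfl fun i _ ↦ Finset.sum_congr rfl fun j _ ↦ by ring

theorem eq_zero_of_apply_self_eq_zero_of_gram_mem {ι V : Type*} [Fintype ι] [DecidableEq ι]
    [AddCommGroup V] [Module (RatFunc ℚ) V] (B : LinearMap.BilinForm (RatFunc ℚ) V)
    (v : Module.Basis ι (RatFunc ℚ) V)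
    (hgram : ∀ i j, B (v i) (v j) - (if i = j then 1 else 0) ∈ tA0Set)
    {x : V} (hx : B x x = 0) : x = 0 := by
  by_contra hx₀
  obtain ⟨u, hu, q, hq, i₀, hi₀⟩ :=
    RatFunc.exists_mul_eq_algebraMap_eval_zero_ne_zero (v.repr x) (by simpa using hx₀)
  choose e he hgram using hgram
  have hux : u • x = ∑ i, algebraMap ℚ[X] (RatFunc ℚ) (q i) • v i := by
    simp_rw [← hq, ← smul_smul, ← Finset.smul_sum, v.sum_repr]
  have hexp := B.apply_sum_smul_sum_smul v _ e (fun i j ↦ by rw [← hgram]; ring)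
    fun i ↦ algebraMap ℚ[X] (RatFunc ℚ) (q i)
  rw [← hux, map_smul, map_smul, LinearMap.smul_apply, hx, smul_zero, smul_zero] at hexp
  have hP : (∑ i, q i * q i).eval 0 ≠ 0 := by
    simp only [eval_finsetSum, eval_mul]
    exact (Finset.sum_pos' (fun i _ ↦ mul_self_nonneg ((q i).eval 0))
      ⟨i₀, Finset.mem_univ _, mul_self_pos.mpr hi₀⟩).ne'
  have hA : ∑ i, ∑ j, algebraMap ℚ[X] (RatFunc ℚ) (q i) * algebraMap ℚ[X] (RatFunc ℚ) (q j) *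
      e i j ∈ A0 :=
    Subring.sum_mem _ fun i _ ↦ Subring.sum_mem _ fun j _ ↦
      Subring.mul_mem _ (Subring.mul_mem _ (algebraMap_mem_A0 _) (algebraMap_mem_A0 _)) (he i j)
  refine algebraMap_add_X_mul_ne_zero hP hA ?_
  simpa only [map_sum, map_mul] using hexp.symm

lemma LinearMap.BilinForm.isCompl_orthogonal_of_anisotropic {K V : Type*} [Field K]
    [AddCommGroup V] [Module K V] [FiniteDimensional K V] {B : LinearMap.BilinForm K V}
    (hB : B.IsRefl) (hanis : ∀ x, B x x = 0 → x = 0) (W : Submodule K V) :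
    IsCompl W (B.orthogonal W) :=
  (isCompl_orthogonal_iff_disjoint hB).mpr <| Submodule.disjoint_def.mpr fun x hxW hxW' ↦
    hanis x (hxW' x hxW)

/-- with a basis whose Gram matrix entries lie in `δ i j + t·A₀`,
every subspace `W` satisfies `V = W ⊕ W^⊥`. -/
theorem stmt_5 (n : ℕ) (V : Type*) [AddCommGroup V] [Module (RatFunc ℚ) V]
    (B : LinearMap.BilinForm (RatFunc ℚ) V)
    (hsymm : ∀ x y, B x y = B y x)
    (v : Module.Basis (Fin n) (RatFunc ℚ) V)
    (hgram : ∀ i j, B (v i) (v j) - (if i = j then 1 else 0) ∈ tA0Set)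
    (W : Submodule (RatFunc ℚ) V) :
    IsCompl W (B.orthogonal W) ∧
    (B.orthogonal W : Set V) = {x : V | ∀ w ∈ W, B x w = 0} := by
  have : FiniteDimensional (RatFunc ℚ) V := v.finiteDimensional_of_finite
  refine ⟨B.isCompl_orthogonal_of_anisotropic (LinearMap.BilinForm.isSymm_def.mpr hsymm).isRefl
    (fun x ↦ eq_zero_of_apply_self_eq_zero_of_gram_mem B v hgram) W, ?_⟩
  ext x
  simp only [SetLike.mem_coe, LinearMap.BilinForm.mem_orthogonal_iff, Set.mem_ofPred_eq, hsymm x]
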